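/- arXiv:1204.1202 — 2 statements merged into one kernel-verified Lean document; each statement's English description precedes it below -/
import Mathlib

section
/- Let k ≥ 1, d ≥ 1 and set n = (k-1)d + 1, with colour classes z : Fin n → Fin k → ℝ^d such that z j is injective for each j. Then the set of normalized colourful k-partitions with the equal-coefficients property, namely the set of σ : Fin n → Equiv.Perm (Fin k) with σ 0 equal to the identity permutation for which there exist α : Fin n → ℝ with α j ≥ 0, ∑ j, α j = 1, and ∑ j, α j • z j (σ j i) independent of i ∈ Fin k, has cardinality at least ((k-1)!)^{(k-1)d}. -/
/-!
Let `C` be the cyclic subgroup of `Perm (Fin k)` generated by the rotation `i ↦ i + 1`. Encode a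
permutation `τ` of colour `j` by the differences `z j (τ (a + 1)) - z j (τ 0)`, `a < k - 1`. Over
a left coset `ρ C` these vectors sum to zero, since for each `i` the elements of the coset send
`i` to every point exactly once. This gives `(k-1)d + 1` colour classes with `0` in their convex
hulls in a space of dimension `(k-1)d`, so Bárány's colourful Carathéodory theorem picks
`τ_j ∈ ρ_j C` with `0` in the hull of the picked vectors: `τ` has equal coefficients.
Right-multiplying by `τ_0⁻¹ ∈ C` normalises `τ_0 = 1` without changing the cosets, so the cosets
of `σ_1, …, σ_{(k-1)d}` can be prescribed freely, and `[Perm (Fin k) : C] = (k-1)!`.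

Colourful Carathéodory: let `x` be the point of least norm in the union of the hulls of all
colourful selections, lying in the hull of `p`. If `x ≠ 0`, then `⟪x, p i⟫ ≥ ‖x‖²` for all `i`,
so `x` is a convex combination of affinely independent `p i` on the hyperplane
`⟪x, ·⟫ = ‖x‖²`; these are linearly independent, so some colour `i₀` is not needed. Replacing
`p i₀` by a point of colour `i₀` with `⟪x, ·⟫ ≤ 0` gives a hull containing `x` and contradicting
the minimality of `‖x‖`.
-/

open Set Module
open scoped RealInnerProductSpace

lemma exists_weights_of_mem_convexHull_range {E ι : Type*} [AddCommGroup E] [Module ℝ E]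
    [Fintype ι] {p : ι → E} {x : E} (hx : x ∈ convexHull ℝ (range p)) :
    ∃ w : ι → ℝ, (∀ i, 0 ≤ w i) ∧ ∑ i, w i = 1 ∧ ∑ i, w i • p i = x := by
  classical
  rw [convexHull_range_eq_exists_affineCombination] at hx
  obtain ⟨s, w, hw₀, hw₁, rfl⟩ := hx
  refine ⟨fun i => if i ∈ s then w i else 0, fun i => ?_, ?_, ?_⟩
  · dsimp only
    split_ifs with hi
    exacts [hw₀ i hi, le_rfl]
  · simpa [Finset.sum_ite_mem] using hw₁
  · simp [ite_smul, Finset.sum_ite_mem, s.affineCombination_eq_linear_combination p w hw₁]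

lemma zero_mem_convexHull_range_of_sum_eq_zero {E ι : Type*} [AddCommGroup E] [Module ℝ E]
    [Fintype ι] [Nonempty ι] {q : ι → E} (hq : ∑ r, q r = 0) :
    (0 : E) ∈ convexHull ℝ (range q) := by
  have := Finset.univ.centerMass_mem_convexHull (w := fun _ => (1 : ℝ)) (z := q)
    (fun _ _ => zero_le_one) (by simpa using Fintype.card_pos) (fun r _ => mem_range_self r)
  simpa [Finset.centerMass, hq] using this

lemma exists_apply_nonpos_of_zero_mem_convexHull {E ι : Type*} [AddCommGroup E] [Module ℝ E]
    (f : E →ₗ[ℝ] ℝ) {q : ι → E} (hq : (0 : E) ∈ convexHull ℝ (range q)) :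
    ∃ r, f (q r) ≤ 0 := by
  by_contra! hpos
  have := convexHull_min (t := {y | 0 < f y}) (range_subset_iff.2 hpos)
    (convex_halfSpace_gt f.isLinear 0) hq
  simp at this

lemma AffineIndependent.linearIndependent_of_apply_eq {k V ι : Type*} [Field k]
    [AddCommGroup V] [Module k V] {p : ι → V} (hp : AffineIndependent k p) (f : V →ₗ[k] k)
    {c : k} (hf : ∀ i, f (p i) = c) (hc : c ≠ 0) : LinearIndependent k p := by
  rw [linearIndependent_iff']
  intro s w hw
  refine hp.eq_zero_of_sum_eq_zero ?_ hw
  have := congrArg f hw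
  simp only [map_sum, map_smul, hf, smul_eq_mul, ← Finset.sum_mul, map_zero] at this
  exact (mul_eq_zero.1 this).resolve_right hc

section InnerProductSpace

variable {V : Type*} [NormedAddCommGroup V] [InnerProductSpace ℝ V]

lemma sq_norm_le_inner_of_isMinOn_norm {K : Set V} (hK : Convex ℝ K) {x y : V} (hx : x ∈ K)
    (hmin : IsMinOn (‖·‖) K x) (hy : y ∈ K) : ‖x‖ ^ 2 ≤ ⟪x, y⟫ := by
  have h := (norm_eq_iInf_iff_real_inner_le_zero hK hx (u := 0)).1
    (by simpa using (hmin.iInf_eq hx).symm) y hy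
  rw [zero_sub, inner_neg_left, inner_sub_right, real_inner_self_eq_norm_sq] at h
  linarith

lemma exists_mem_convexHull_image_compl_singleton [FiniteDimensional ℝ V] {ι : Type*}
    [Fintype ι] (hdim : finrank ℝ V < Fintype.card ι) {p : ι → V} {x : V} (hx0 : x ≠ 0)
    (hx : x ∈ convexHull ℝ (range p)) (hp : ∀ i, ‖x‖ ^ 2 ≤ ⟪x, p i⟫) :
    ∃ i₀, x ∈ convexHull ℝ (p '' {i₀}ᶜ) := by
  obtain ⟨ι', _, q, w, hq, hq_ind, hw₀, hw₁, hqx⟩ := eq_pos_convex_span_of_mem_convexHull hx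
  choose f hf using fun j => hq (mem_range_self j)
  have hlow : ∀ j, ‖x‖ ^ 2 ≤ ⟪x, q j⟫ := fun j => hf j ▸ hp (f j)
  have hface : ∀ j, ⟪x, q j⟫ = ‖x‖ ^ 2 := by
    have hsum : ∑ j, w j * (⟪x, q j⟫ - ‖x‖ ^ 2) = 0 := by
      simp only [mul_sub, Finset.sum_sub_distrib, ← Finset.sum_mul, hw₁,
        ← real_inner_smul_right, ← inner_sum, hqx, real_inner_self_eq_norm_sq]
      ring
    intro j
    have hj := (Finset.sum_eq_zero_iff_of_nonneg fun j _ =>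
      mul_nonneg (hw₀ j).le (sub_nonneg.2 (hlow j))).1 hsum j (Finset.mem_univ j)
    linarith [(mul_eq_zero.1 hj).resolve_left (hw₀ j).ne']
  have hq_lin := hq_ind.linearIndependent_of_apply_eq (innerₗ V x) hface (by positivity)
  obtain ⟨i₀, hi₀⟩ : ∃ i₀, ∀ j, f j ≠ i₀ := by
    by_contra! hsurj
    exact (Fintype.card_le_of_surjective f hsurj).not_gt
      (hq_lin.fintype_card_le_finrank.trans_lt hdim)
  exact ⟨i₀, mem_convexHull_of_exists_fintype w q (fun j => (hw₀ j).le) hw₁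
    (fun j => ⟨f j, hi₀ j, hf j⟩) hqx⟩

theorem colorful_caratheodory_of_inner [FiniteDimensional ℝ V] {ι κ : Type*} [Fintype ι]
    [Finite κ] (hdim : finrank ℝ V < Fintype.card ι) (g : ι → κ → V)
    (hg : ∀ i, (0 : V) ∈ convexHull ℝ (range (g i))) :
    ∃ sel : ι → κ, (0 : V) ∈ convexHull ℝ (range fun i => g i (sel i)) := by
  classical
  set K : (ι → κ) → Set V := fun sel => convexHull ℝ (range fun i => g i (sel i))
  obtain ⟨i₁⟩ : Nonempty ι := Fintype.card_pos_iff.1 (by omega)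
  obtain ⟨r₁⟩ : Nonempty κ :=
    range_nonempty_iff_nonempty.1 (convexHull_nonempty_iff.1 ⟨0, hg i₁⟩)
  obtain ⟨x, hxK, hmin⟩ := (isCompact_iUnion fun sel : ι → κ =>
    (finite_range fun i => g i (sel i)).isCompact_convexHull (𝕜 := ℝ)).exists_isMinOn
    ⟨g i₁ r₁, mem_iUnion.2 ⟨fun _ => r₁, subset_convexHull ℝ (range fun j => g j r₁) ⟨i₁, rfl⟩⟩⟩
    continuous_norm.continuousOn
  obtain ⟨sel, hx⟩ := mem_iUnion.1 hxK
  suffices x = 0 from ⟨sel, this ▸ hx⟩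
  by_contra hx0
  have hsupport : ∀ sel', x ∈ K sel' → ∀ y ∈ K sel', ‖x‖ ^ 2 ≤ ⟪x, y⟫ := fun sel' hx' _ hy =>
    sq_norm_le_inner_of_isMinOn_norm (convex_convexHull ℝ _) hx'
      (hmin.on_subset (subset_iUnion K sel')) hy
  obtain ⟨i₀, hdrop⟩ := exists_mem_convexHull_image_compl_singleton hdim hx0 hx
    fun i => hsupport sel hx _ (subset_convexHull ℝ _ (mem_range_self i))
  obtain ⟨r, hr⟩ := exists_apply_nonpos_of_zero_mem_convexHull (innerₗ V x) (hg i₀)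
  set sel' := Function.update sel i₀ r
  have hx' : x ∈ K sel' := by
    refine convexHull_mono ?_ hdrop
    rintro _ ⟨j, hj, rfl⟩
    exact ⟨j, by simp [sel', Function.update_of_ne hj]⟩
  have hy' : g i₀ r ∈ K sel' := subset_convexHull ℝ _ ⟨i₀, by simp [sel']⟩
  have := hsupport sel' hx' _ hy'
  rw [innerₗ_apply_apply] at hr
  exact hx0 (norm_eq_zero.1 (by nlinarith [norm_nonneg x]))

end InnerProductSpace

theorem colorful_caratheodory {E ι κ : Type*} [AddCommGroup E] [Module ℝ E]
    [FiniteDimensional ℝ E] [Fintype ι] [Finite κ] (hdim : finrank ℝ E < Fintype.card ι)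
    (g : ι → κ → E) (hg : ∀ i, (0 : E) ∈ convexHull ℝ (range (g i))) :
    ∃ sel : ι → κ, (0 : E) ∈ convexHull ℝ (range fun i => g i (sel i)) := by
  let e : E ≃ₗ[ℝ] EuclideanSpace ℝ (Fin (finrank ℝ E)) := LinearEquiv.ofFinrankEq _ _ (by simp)
  have he (s : Set E) : convexHull ℝ (e '' s) = e '' convexHull ℝ s :=
    (e.toLinearMap.image_convexHull s).symm
  obtain ⟨sel, hsel⟩ := colorful_caratheodory_of_inner (by simpa using hdim)
    (fun i r => e (g i r)) fun i => by rw [range_comp', he]; exact ⟨0, hg i, map_zero e⟩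
  rw [range_comp' e, he] at hsel
  obtain ⟨y, hy, hy0⟩ := hsel
  exact ⟨sel, e.map_eq_zero_iff.1 hy0 ▸ hy⟩

open Equiv Subgroup

def HasEqualCoefficients {ι κ E : Type*} [Fintype ι] [AddCommGroup E] [Module ℝ E]
    (z : ι → κ → E) (σ : ι → Perm κ) : Prop :=
  ∃ α : ι → ℝ, (∀ j, 0 ≤ α j) ∧ ∑ j, α j = 1 ∧
    ∀ i i', ∑ j, α j • z j (σ j i) = ∑ j, α j • z j (σ j i')

lemma HasEqualCoefficients.mul_right {ι κ E : Type*} [Fintype ι] [AddCommGroup E]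
    [Module ℝ E] {z : ι → κ → E} {σ : ι → Perm κ} (h : HasEqualCoefficients z σ)
    (τ : Perm κ) : HasEqualCoefficients z fun j => σ j * τ := by
  obtain ⟨α, hα₀, hα₁, hα⟩ := h
  exact ⟨α, hα₀, hα₁, fun i i' => hα (τ i) (τ i')⟩

def diffFromZero (R E : Type*) [Ring R] [AddCommGroup E] [Module R E] (m : ℕ) :
    (Fin (m + 1) → E) →ₗ[R] (Fin m → E) where
  toFun f a := f a.succ - f 0
  map_add' f g := by
    ext a
    simp only [Pi.add_apply]
    abel
  map_smul' c f := by
    ext a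
    simp [smul_sub]

lemma diffFromZero_eq_zero_iff {R E : Type*} [Ring R] [AddCommGroup E] [Module R E] {m : ℕ}
    {f : Fin (m + 1) → E} : diffFromZero R E m f = 0 ↔ ∀ i i', f i = f i' := by
  refine ⟨fun h => ?_, fun h => funext fun a => sub_eq_zero.2 (h _ _)⟩
  have hf : ∀ i, f i = f 0 := Fin.cases rfl fun a => sub_eq_zero.1 (congrFun h a)
  exact fun i i' => (hf i).trans (hf i').symm

lemma finRotate_pow_apply (n : ℕ) (r i : Fin n) : (finRotate n ^ (r : ℕ)) i = i + r := by
  rw [Perm.coe_pow, ← finCycle_eq_finRotate_iterate, finCycle_apply]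

lemma orderOf_finRotate_succ (m : ℕ) : orderOf (finRotate (m + 1)) = m + 1 := by
  rcases m with _ | m
  · rw [finRotate_one, ← Perm.one_def, orderOf_one]
  · rw [isCycle_finRotate.orderOf, support_finRotate, Finset.card_univ, Fintype.card_fin]

lemma index_zpowers_finRotate (m : ℕ) : (zpowers (finRotate (m + 1))).index = m.factorial := by
  have h := (zpowers (finRotate (m + 1))).index_mul_card
  rw [Nat.card_zpowers, orderOf_finRotate_succ, Nat.card_perm, Nat.card_eq_fintype_card,
    Fintype.card_fin, Nat.factorial_succ, mul_comm (m + 1)] at h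
  exact Nat.eq_of_mul_eq_mul_right m.succ_pos h

theorem exists_hasEqualCoefficients_mk_eq {ι E : Type*} [Fintype ι] [AddCommGroup E]
    [Module ℝ E] [FiniteDimensional ℝ E] {m : ℕ} (hdim : m * finrank ℝ E < Fintype.card ι)
    (z : ι → Fin (m + 1) → E) (ρ : ι → Perm (Fin (m + 1))) :
    ∃ σ, HasEqualCoefficients z σ ∧
      ∀ j, (σ j : Perm (Fin (m + 1)) ⧸ zpowers (finRotate (m + 1))) = ρ j := by
  set c := finRotate (m + 1)
  set D := diffFromZero ℝ E m
  have hclass : ∀ j, (0 : Fin m → E) ∈ convexHull ℝ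
      (range fun r : Fin (m + 1) => D fun i => z j ((ρ j * c ^ (r : ℕ)) i)) := by
    intro j
    refine zero_mem_convexHull_range_of_sum_eq_zero ?_
    rw [← map_sum, diffFromZero_eq_zero_iff]
    intro i i'
    simp only [Finset.sum_apply, Perm.mul_apply, c, finRotate_pow_apply]
    exact (Equiv.sum_comp (Equiv.addLeft i) fun u => z j (ρ j u)).trans
      (Equiv.sum_comp (Equiv.addLeft i') fun u => z j (ρ j u)).symm
  obtain ⟨sel, hsel⟩ :=
    colorful_caratheodory (by simpa [Module.finrank_pi_fintype] using hdim) _ hclass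
  obtain ⟨α, hα₀, hα₁, hα⟩ := exists_weights_of_mem_convexHull_range hsel
  refine ⟨fun j => ρ j * c ^ (sel j : ℕ), ⟨α, hα₀, hα₁, ?_⟩, fun j => ?_⟩
  · have hconst : D (∑ j, α j • fun i => z j ((ρ j * c ^ (sel j : ℕ)) i)) = 0 := by
      simpa only [map_sum, map_smul] using hα
    intro i i'
    simpa only [Finset.sum_apply, Pi.smul_apply] using diffFromZero_eq_zero_iff.1 hconst i i'
  · exact QuotientGroup.mk_mul_of_mem _ (npow_mem_zpowers _ _)

theorem pow_index_le_ncard {G : Type*} [Group G] [Finite G] (H : Subgroup G) (N : ℕ)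
    (P : (Fin (N + 1) → G) → Prop) (hP : ∀ σ τ, P σ → P fun j => σ j * τ)
    (hH : ∀ ρ : Fin (N + 1) → G, ∃ σ, P σ ∧ ∀ j, (σ j : G ⧸ H) = ρ j) :
    H.index ^ N ≤ {σ : Fin (N + 1) → G | σ 0 = 1 ∧ P σ}.ncard := by
  set S := {σ : Fin (N + 1) → G | σ 0 = 1 ∧ P σ}
  have hsurj : Function.Surjective fun (σ : S) (j : Fin N) => (σ.1 j.succ : G ⧸ H) := by
    intro t
    obtain ⟨σ, hσ, hσt⟩ := hH (Fin.cons 1 fun j => (t j).out)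
    have h0 : (σ 0)⁻¹ ∈ H := by
      have := hσt 0
      rw [Fin.cons_zero, QuotientGroup.eq] at this
      simpa using this
    refine ⟨⟨fun j => σ j * (σ 0)⁻¹, mul_inv_cancel _, hP _ _ hσ⟩, funext fun j => ?_⟩
    change ((σ j.succ * (σ 0)⁻¹ : G) : G ⧸ H) = t j
    rw [QuotientGroup.mk_mul_of_mem _ h0, hσt, Fin.cons_succ, QuotientGroup.out_eq']
  calc H.index ^ N = Nat.card (Fin N → G ⧸ H) := by
        rw [Nat.card_fun, Nat.card_fin, Subgroup.index]
    _ ≤ Nat.card S := Nat.card_le_card_of_surjective _ hsurj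
    _ = S.ncard := Nat.card_coe_set_eq S

theorem count_equal_coefficients_partitions_general (k d : ℕ) (hk : 1 ≤ k)
    (z : Fin ((k - 1) * d + 1) → Fin k → (Fin d → ℝ)) :
    (Nat.factorial (k - 1)) ^ ((k - 1) * d) ≤
      Set.ncard {σ : Fin ((k - 1) * d + 1) → Equiv.Perm (Fin k) |
        σ 0 = 1 ∧
        ∃ α : Fin ((k - 1) * d + 1) → ℝ,
          (∀ j, 0 ≤ α j) ∧ (∑ j, α j = 1) ∧
          ∀ i i' : Fin k, ∑ j, α j • z j (σ j i) = ∑ j, α j • z j (σ j i')} := by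
  obtain ⟨m, rfl⟩ := Nat.exists_eq_add_of_le' hk
  have hindex : (m + 1 - 1).factorial = (zpowers (finRotate (m + 1))).index :=
    (index_zpowers_finRotate m).symm
  rw [hindex]
  exact pow_index_le_ncard _ _ (HasEqualCoefficients z) (fun σ τ h => h.mul_right τ)
    (exists_hasEqualCoefficients_mk_eq (by simp) z)

/-- There are at least `((k-1)!)^{(k-1)d}` normalized colourful `k`-partitions
(those with `σ 0 = id`) whose convex hulls intersect with equal coefficients. -/
theorem count_equal_coefficients_partitions (k d : ℕ) (hk : 1 ≤ k) (hd : 1 ≤ d)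
    (z : Fin ((k - 1) * d + 1) → Fin k → (Fin d → ℝ))
    (hz : ∀ j, Function.Injective (z j)) :
    (Nat.factorial (k - 1)) ^ ((k - 1) * d) ≤
      Set.ncard {σ : Fin ((k - 1) * d + 1) → Equiv.Perm (Fin k) |
        σ 0 = 1 ∧
        ∃ α : Fin ((k - 1) * d + 1) → ℝ,
          (∀ j, 0 ≤ α j) ∧ (∑ j, α j = 1) ∧
          ∀ i i' : Fin k, ∑ j, α j • z j (σ j i) = ∑ j, α j • z j (σ j i')} :=
  count_equal_coefficients_partitions_general k d hk z
end

section
/- Let k ≥ 1, let u : Fin k → ℝ^{k-1} satisfy ∑ i, u i = 0, and let z : Fin k → ℝ^d be any k points. For m ∈ Fin k let v m = ∑ i, (u i) ⊗ (z (i + m)) ∈ ℝ^{k-1} ⊗ ℝ^d, where i + m is addition modulo k. Then ∑ m, v m = 0; consequently the origin is the barycentre of the points v 0, …, v (k-1), and hence the origin lies in the convex hull of the finite set {∑ i, (u i) ⊗ (z (σ i)) : σ ∈ Equiv.Perm (Fin k)}. -/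
open scoped TensorProduct

theorem TensorProduct.sum_sum_tmul_add {R G M N : Type*} [CommSemiring R] [AddCommMonoid M]
    [AddCommMonoid N] [Module R M] [Module R N] [Fintype G] [AddGroup G] (f : G → M) (g : G → N) :
    ∑ m, ∑ i, f i ⊗ₜ[R] g (i + m) = (∑ i, f i) ⊗ₜ[R] ∑ j, g j := by
  rw [Finset.sum_comm, TensorProduct.sum_tmul]
  refine Finset.sum_congr rfl fun i _ => ?_
  rw [← TensorProduct.tmul_sum]
  exact congrArg _ (Equiv.sum_comp (Equiv.addLeft i) g)

theorem zero_mem_convexHull_range_of_sum_eq_zero_s11 {R E ι : Type*} [Field R] [LinearOrder R]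
    [IsStrictOrderedRing R] [AddCommGroup E] [Module R E] [Fintype ι] [Nonempty ι] {v : ι → E}
    (hv : ∑ i, v i = 0) : (0 : E) ∈ convexHull R (Set.range v) := by
  have hcenter : Finset.univ.centerMass (fun _ => (1 : R)) v = 0 := by
    simp only [Finset.centerMass, one_smul, hv, smul_zero]
  rw [← hcenter]
  exact Finset.univ.centerMass_mem_convexHull (fun _ _ => zero_le_one)
    (by simpa using Fintype.card_pos) fun i _ => Set.mem_range_self i

/-- The cyclic shifts `v m = ∑ i, u i ⊗ z (i + m)` sum to zero whenever
`∑ i, u i = 0`; hence the origin is in the convex hull of the set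
`{∑ i, u i ⊗ z (σ i) : σ a permutation}`. -/
theorem cyclic_shifts_capture_origin (k d : ℕ) (hk : 1 ≤ k)
    (u : Fin k → (Fin (k - 1) → ℝ)) (hu : ∑ i, u i = 0)
    (z : Fin k → (Fin d → ℝ)) :
    (∑ m : Fin k, ∑ i : Fin k, u i ⊗ₜ[ℝ] z (i + m) =
      (0 : (Fin (k - 1) → ℝ) ⊗[ℝ] (Fin d → ℝ))) ∧
    (0 : (Fin (k - 1) → ℝ) ⊗[ℝ] (Fin d → ℝ)) ∈
      convexHull ℝ {w | ∃ σ : Equiv.Perm (Fin k), w = ∑ i, u i ⊗ₜ[ℝ] z (σ i)} := by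
  have : NeZero k := ⟨by omega⟩
  have hsum : ∑ m : Fin k, ∑ i : Fin k, u i ⊗ₜ[ℝ] z (i + m) =
      (0 : (Fin (k - 1) → ℝ) ⊗[ℝ] (Fin d → ℝ)) := by
    rw [TensorProduct.sum_sum_tmul_add, hu, TensorProduct.zero_tmul]
  refine ⟨hsum, convexHull_mono ?_ (zero_mem_convexHull_range_of_sum_eq_zero_s11 hsum)⟩
  rintro _ ⟨m, rfl⟩
  exact ⟨Equiv.addRight m, rfl⟩
end
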